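/- For an inverse system (M_n)_{n ≥ 1} of S-modules with S-linear transition maps π_{l,k} : M_l → M_k for k ≤ l, where 𝔞^n M_n = 0 for all n, the following are equivalent: (1) every M_n is a finitely generated S-module and for all k ≤ l the map induced by π_{l,k} from M_l/𝔞^k M_l to M_k is an isomorphism; (2) M_1 is a finitely generated S-module and for all k ≤ l the sequence 0 → 𝔞^k M_l → M_l → M_k → 0 is exact, i.e. π_{l,k} is surjective with kernel exactly 𝔞^k M_l. -/

import Mathlib

/-!
Both conditions contain the exactness of `0 → 𝔞^k M_l → M_l → M_k → 0`, which is the same as the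
bijectivity of the map `M_l/𝔞^k M_l → M_k` induced by `π_{l,k}`. It remains to see that finiteness
of `M_1` propagates to every `M_n`: `M_n/𝔞 M_n ≅ M_1` is finite, and since `𝔞` acts nilpotently on
`M_n`, any `N` with `N + 𝔞 M_n = M_n` also satisfies `N + 𝔞^j M_n = M_n` for all `j`, so `N = M_n`.
-/

namespace Submodule

theorem sup_pow_smul_top_eq_top {R M : Type*} [CommSemiring R] [AddCommMonoid M] [Module R M]
    {I : Ideal R} {N : Submodule R M} (h : N ⊔ I • ⊤ = ⊤) (n : ℕ) : N ⊔ I ^ n • ⊤ = ⊤ := by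
  induction n with
  | zero => rw [pow_zero, Ideal.one_eq_top, top_smul, sup_top_eq]
  | succ n ih =>
    refine top_le_iff.1 ?_
    calc ⊤ = N ⊔ I • (N ⊔ I ^ n • ⊤) := by rw [ih, h]
      _ = N ⊔ I • N ⊔ I ^ (n + 1) • ⊤ := by rw [smul_sup, ← sup_assoc, pow_succ', mul_smul]
      _ ≤ N ⊔ I ^ (n + 1) • ⊤ := by rw [sup_eq_left.2 (smul_le_right : I • N ≤ N)]

theorem bijective_liftQ_iff {R M N : Type*} [Ring R] [AddCommGroup M] [Module R M]
    [AddCommGroup N] [Module R N] (p : Submodule R M) (f : M →ₗ[R] N) (h : p ≤ LinearMap.ker f) :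
    Function.Bijective (p.liftQ f h) ↔ Function.Surjective f ∧ LinearMap.ker f = p := by
  rw [Function.Bijective, ← LinearMap.ker_eq_bot, ker_liftQ, ← le_bot_iff, map_le_iff_le_comap,
    comap_bot, ker_mkQ, ← (mkQ_surjective p).of_comp_iff, ← LinearMap.coe_comp, liftQ_mkQ,
    and_comm, le_antisymm_iff, and_iff_left h]

end Submodule

theorem Module.Finite.of_finite_quotient_smul_top {R M : Type*} [CommRing R] [AddCommGroup M]
    [Module R M] {I : Ideal R} {n : ℕ} (hI : I ^ n • (⊤ : Submodule R M) = ⊥)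
    [Module.Finite R (M ⧸ I • (⊤ : Submodule R M))] : Module.Finite R M := by
  set P : Submodule R M := I • ⊤
  obtain ⟨m, s, hs⟩ := Module.Finite.exists_fin (R := R) (M := M ⧸ P)
  set t := Function.surjInv P.mkQ_surjective ∘ s with ht
  have hspan : Submodule.span R (Set.range t) ⊔ P = ⊤ := by
    rw [sup_comm, ← Submodule.map_mkQ_eq_top, Submodule.map_span, ← Set.range_comp, ht,
      ← Function.comp_assoc, Function.comp_surjInv, Function.id_comp, hs]
  have htop := Submodule.sup_pow_smul_top_eq_top hspan n
  rw [hI, sup_bot_eq] at htop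
  exact ⟨htop ▸ Submodule.fg_span (Set.finite_range t)⟩

/-- Given an inverse system `(M n)` (where `M n` plays the role of "`M_{n+1}`", so that the
`n`-th module is annihilated by `𝔞^(n+1)`), the map `M_l/𝔞^(k+1) M_l → M_k` induced by the
transition map `π_{l,k}`. -/
noncomputable def piInduced (S : Type*) [CommRing S] (𝔞 : Ideal S)
    (M : ℕ → Type*) [∀ n, AddCommGroup (M n)] [∀ n, Module S (M n)]
    (π : ∀ k l, k ≤ l → (M l →ₗ[S] M k))
    (hann : ∀ n, (𝔞 ^ (n + 1) • ⊤ : Submodule S (M n)) = ⊥)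
    (k l : ℕ) (h : k ≤ l) :
    (M l ⧸ (𝔞 ^ (k + 1) • ⊤ : Submodule S (M l))) →ₗ[S] M k :=
  Submodule.liftQ _ (π k l h)
    (by
      refine Submodule.smul_le.2 fun r hr m _ => ?_
      rw [LinearMap.mem_ker, map_smul]
      have hm : r • (π k l h) m ∈ (𝔞 ^ (k + 1) • ⊤ : Submodule S (M k)) :=
        Submodule.smul_mem_smul hr Submodule.mem_top
      rw [hann k] at hm
      simpa using hm)

theorem stmt11 (S : Type*) [CommRing S] (𝔞 : Ideal S)
    (M : ℕ → Type*) [∀ n, AddCommGroup (M n)] [∀ n, Module S (M n)]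
    (π : ∀ k l, k ≤ l → (M l →ₗ[S] M k))
    (hann : ∀ n, (𝔞 ^ (n + 1) • ⊤ : Submodule S (M n)) = ⊥) :
    ((∀ n, Module.Finite S (M n)) ∧
      ∀ k l (h : k ≤ l), Function.Bijective (piInduced S 𝔞 M π hann k l h)) ↔
    (Module.Finite S (M 0) ∧
      ∀ k l (h : k ≤ l), Function.Surjective (π k l h) ∧
        LinearMap.ker (π k l h) = (𝔞 ^ (k + 1) • ⊤ : Submodule S (M l))) := by
  have hbij : ∀ k l (h : k ≤ l), Function.Bijective (piInduced S 𝔞 M π hann k l h) ↔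
      Function.Surjective (π k l h) ∧ LinearMap.ker (π k l h) = 𝔞 ^ (k + 1) • ⊤ :=
    fun k l h => Submodule.bijective_liftQ_iff _ _ _
  simp only [hbij]
  refine and_congr_left fun hexact => ⟨fun hfin => hfin 0, fun hfin₀ n => ?_⟩
  let e := LinearEquiv.ofBijective _ ((hbij 0 n n.zero_le).2 (hexact 0 n n.zero_le))
  have : Module.Finite S (M n ⧸ (𝔞 ^ (0 + 1) • ⊤ : Submodule S (M n))) := .equiv e.symm
  rw [zero_add, pow_one] at this
  exact Module.Finite.of_finite_quotient_smul_top (hann n)
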